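/- Let (i,j) be a pair of distinct vertices with w_ij < w̄ and δ ∈ (0, w̄ − w_ij], and suppose z_i ≠ z_j. If there exists ε > 0 such that (z̃ᵀ(I+L)^{-1}v_ij)/(z̃ᵀv_ij) ≥ ε + δ/(2δ + (1 + λ₂(L))²), then P(z) − P(z⁺) ≥ 2δ·ε·(z_i − z_j)²/(1 + 2δ). -/

import Mathlib

open Matrix Finset

noncomputable def deg {n : ℕ} (W : Matrix (Fin n) (Fin n) ℝ) (i : Fin n) : ℝ := ∑ j, W i j

noncomputable def lap {n : ℕ} (W : Matrix (Fin n) (Fin n) ℝ) : Matrix (Fin n) (Fin n) ℝ :=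
  Matrix.diagonal (deg W) - W

noncomputable def mean {n : ℕ} (x : Fin n → ℝ) : ℝ := (∑ i, x i) / n

noncomputable def ctr {n : ℕ} (x : Fin n → ℝ) : Fin n → ℝ := fun i => x i - mean x

noncomputable def pol {n : ℕ} (x : Fin n → ℝ) : ℝ := ∑ i, (x i - mean x) ^ 2

def vij {n : ℕ} (i j : Fin n) : Fin n → ℝ :=
  fun k => (if k = i then (1 : ℝ) else 0) - (if k = j then (1 : ℝ) else 0)

/-!
Put `u = (I + L)⁻¹ v_ij`. By Sherman–Morrison, `z⁺ = z - c u` with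
`c = δ (z_i - z_j) / (1 + δ v_ijᵀu)`, so `P(z) - P(z⁺) = 2c z̃ᵀu - c² P(u)` and `P(u) ≤ ‖u‖²`.
Since `I + L ⪰ I`, `‖u‖² ≤ v_ijᵀu ≤ ‖v_ij‖² = 2`. Moreover `u ⟂ 1 ∈ ker L`, so the Rayleigh
quotient of `L` at `u` is at least `λ₂(L)`, whence `(1 + λ₂)² ‖u‖² ≤ ‖(I + L) u‖² = 2`.
These bounds turn the hypothesis on `z̃ᵀu / z̃ᵀv_ij` into the claimed lower bound.
-/

section ShermanMorrison
variable {m 𝕜 : Type*} [Fintype m] [DecidableEq m] [Field 𝕜]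

theorem Matrix.inv_add_vecMulVec {A : Matrix m m 𝕜} (hA : IsUnit A.det) {u w : m → 𝕜}
    (h : 1 + w ⬝ᵥ (A⁻¹ *ᵥ u) ≠ 0) :
    (A + vecMulVec u w)⁻¹ =
      A⁻¹ - (1 + w ⬝ᵥ (A⁻¹ *ᵥ u))⁻¹ • vecMulVec (A⁻¹ *ᵥ u) (w ᵥ* A⁻¹) := by
  refine inv_eq_right_inv ?_
  rw [add_mul, mul_sub, mul_sub, Matrix.mul_smul, Matrix.mul_smul, mul_vecMulVec, mulVec_mulVec,
    mul_nonsing_inv _ hA, one_mulVec, vecMulVec_mul_vecMulVec, vecMulVec_mul, vecMulVec_smul,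
    smul_smul]
  generalize w ⬝ᵥ (A⁻¹ *ᵥ u) = q at h ⊢
  have hc : (1 + q)⁻¹ + (1 + q)⁻¹ * q = 1 := by field_simp
  linear_combination (norm := module) (-hc) • vecMulVec u (w ᵥ* A⁻¹)

theorem Matrix.inv_add_smul_vecMulVec_self_mulVec {A : Matrix m m 𝕜} (hA : IsUnit A.det)
    {v : m → 𝕜} {δ : 𝕜} (h : 1 + δ * (v ⬝ᵥ (A⁻¹ *ᵥ v)) ≠ 0) (s : m → 𝕜) :
    (A + δ • vecMulVec v v)⁻¹ *ᵥ s =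
      A⁻¹ *ᵥ s - (δ * (v ⬝ᵥ (A⁻¹ *ᵥ s)) / (1 + δ * (v ⬝ᵥ (A⁻¹ *ᵥ v)))) • (A⁻¹ *ᵥ v) := by
  rw [← smul_vecMulVec, inv_add_vecMulVec hA (by rwa [mulVec_smul, dotProduct_smul, smul_eq_mul]),
    sub_mulVec, smul_mulVec, vecMulVec_mulVec, op_smul_eq_smul, ← dotProduct_mulVec,
    mulVec_smul, dotProduct_smul, smul_eq_mul, smul_smul, smul_smul]
  congr 2
  ring

end ShermanMorrison

section Resolvent
variable {m : Type*} [Fintype m] {L : Matrix m m ℝ} {u v : m → ℝ}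

lemma sq_dotProduct_le (x y : m → ℝ) : (x ⬝ᵥ y) ^ 2 ≤ (x ⬝ᵥ x) * (y ⬝ᵥ y) := by
  simpa only [dotProduct, sq] using Finset.sum_mul_sq_le_sq_mul_sq Finset.univ x y

lemma dotProduct_eq_of_add_mulVec_eq {w : m → ℝ} (hw : w ᵥ* L = 0) (h : u + L *ᵥ u = v) :
    w ⬝ᵥ u = w ⬝ᵥ v := by
  rw [← h, dotProduct_add, dotProduct_mulVec, hw, zero_dotProduct, add_zero]

lemma dotProduct_self_le_of_add_mulVec_eq (hL : L.PosSemidef) (h : u + L *ᵥ u = v) :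
    u ⬝ᵥ u ≤ v ⬝ᵥ u := by
  have := hL.dotProduct_mulVec_nonneg u
  rw [star_trivial] at this
  rw [← h, add_dotProduct, dotProduct_comm (L *ᵥ u)]
  linarith

lemma dotProduct_le_of_add_mulVec_eq (hL : L.PosSemidef) (h : u + L *ᵥ u = v) :
    v ⬝ᵥ u ≤ v ⬝ᵥ v := by
  have htq := dotProduct_self_le_of_add_mulVec_eq hL h
  have hcs := sq_dotProduct_le v u
  have ht : 0 ≤ u ⬝ᵥ u := by simpa using dotProduct_star_self_nonneg u
  have hv : 0 ≤ v ⬝ᵥ v := by simpa using dotProduct_star_self_nonneg v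
  nlinarith

lemma sq_one_add_mul_dotProduct_self_le {l : ℝ} (hl : 0 ≤ l)
    (hlu : l * (u ⬝ᵥ u) ≤ u ⬝ᵥ (L *ᵥ u)) (h : u + L *ᵥ u = v) :
    (u ⬝ᵥ u) * (1 + l) ^ 2 ≤ v ⬝ᵥ v := by
  have hvv : v ⬝ᵥ v = u ⬝ᵥ u + 2 * (u ⬝ᵥ (L *ᵥ u)) + (L *ᵥ u) ⬝ᵥ (L *ᵥ u) := by
    rw [← h]
    simp only [add_dotProduct, dotProduct_add, dotProduct_comm (L *ᵥ u) u]
    ring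
  have ht : 0 ≤ u ⬝ᵥ u := by simpa using dotProduct_star_self_nonneg u
  have hLu : l ^ 2 * (u ⬝ᵥ u) ≤ (L *ᵥ u) ⬝ᵥ (L *ᵥ u) := by
    rcases ht.eq_or_lt with h0 | hpos
    · simpa [← h0] using dotProduct_star_self_nonneg (L *ᵥ u)
    refine le_of_mul_le_mul_left ?_ hpos
    calc u ⬝ᵥ u * (l ^ 2 * (u ⬝ᵥ u)) = (l * (u ⬝ᵥ u)) ^ 2 := by ring
      _ ≤ (u ⬝ᵥ (L *ᵥ u)) ^ 2 := pow_le_pow_left₀ (by positivity) hlu 2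
      _ ≤ _ := sq_dotProduct_le u (L *ᵥ u)
  nlinarith

end Resolvent

namespace Matrix.IsHermitian
variable {n : Type*} [Fintype n] [DecidableEq n] {A : Matrix n n ℝ} (hA : A.IsHermitian)

lemma dotProduct_eq_sum_eigenvectorBasis (x y : n → ℝ) :
    x ⬝ᵥ y = ∑ k, (⇑(hA.eigenvectorBasis k) ⬝ᵥ x) * (⇑(hA.eigenvectorBasis k) ⬝ᵥ y) := by
  have := hA.eigenvectorBasis.sum_inner_mul_inner (WithLp.toLp 2 y) (WithLp.toLp 2 x)
  simp only [EuclideanSpace.inner_eq_star_dotProduct, star_trivial] at this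
  rw [← this]
  exact Finset.sum_congr rfl fun k _ => by rw [dotProduct_comm x, mul_comm]

lemma eigenvectorBasis_dotProduct_mulVec (k : n) (x : n → ℝ) :
    ⇑(hA.eigenvectorBasis k) ⬝ᵥ (A *ᵥ x) = hA.eigenvalues k * (⇑(hA.eigenvectorBasis k) ⬝ᵥ x) := by
  rw [dotProduct_mulVec, ← mulVec_transpose, ← conjTranspose_eq_transpose_of_trivial, hA.eq,
    mulVec_eigenvectorBasis, smul_dotProduct, smul_eq_mul]

lemma dotProduct_mulVec_eq_sum_eigenvalues (x : n → ℝ) :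
    x ⬝ᵥ (A *ᵥ x) = ∑ k, hA.eigenvalues k * (⇑(hA.eigenvectorBasis k) ⬝ᵥ x) ^ 2 := by
  rw [hA.dotProduct_eq_sum_eigenvectorBasis]
  refine Finset.sum_congr rfl fun k _ => ?_
  rw [eigenvectorBasis_dotProduct_mulVec]
  ring

lemma dotProduct_self_eq_sum_sq (x : n → ℝ) :
    x ⬝ᵥ x = ∑ k, (⇑(hA.eigenvectorBasis k) ⬝ᵥ x) ^ 2 := by
  simp only [hA.dotProduct_eq_sum_eigenvectorBasis x x, sq]

lemma eigenvectorBasis_dotProduct_eq_zero {w x : n → ℝ} (hw : w ≠ 0) (hwx : w ⬝ᵥ x = 0) {k₀ : n}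
    (hk₀ : ∀ k ≠ k₀, ⇑(hA.eigenvectorBasis k) ⬝ᵥ w = 0) :
    ⇑(hA.eigenvectorBasis k₀) ⬝ᵥ x = 0 := by
  have hsum (y : n → ℝ) :
      w ⬝ᵥ y = (⇑(hA.eigenvectorBasis k₀) ⬝ᵥ w) * (⇑(hA.eigenvectorBasis k₀) ⬝ᵥ y) := by
    rw [hA.dotProduct_eq_sum_eigenvectorBasis]
    exact Finset.sum_eq_single k₀ (fun k _ hk => by rw [hk₀ k hk, zero_mul]) (by simp)
  have hwk₀ : ⇑(hA.eigenvectorBasis k₀) ⬝ᵥ w ≠ 0 := by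
    intro h
    exact hw (dotProduct_self_eq_zero.mp (by rw [hsum, h, zero_mul]))
  exact (mul_eq_zero.mp ((hsum x).symm.trans hwx)).resolve_left hwk₀

end Matrix.IsHermitian

theorem Matrix.PosSemidef.sorted_eigenvalue_one_mul_dotProduct_self_le {n : ℕ}
    {A : Matrix (Fin n) (Fin n) ℝ} (hA : A.IsHermitian) (hpsd : A.PosSemidef) (hn : 1 < n)
    {μ : Fin n → ℝ} (hμ : Monotone μ) {σ : Equiv.Perm (Fin n)} (hσ : hA.eigenvalues = μ ∘ σ)
    {w : Fin n → ℝ} (hw : w ≠ 0) (hAw : A *ᵥ w = 0) {x : Fin n → ℝ} (hx : w ⬝ᵥ x = 0) :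
    μ ⟨1, hn⟩ * (x ⬝ᵥ x) ≤ x ⬝ᵥ (A *ᵥ x) := by
  set k₀ := σ.symm ⟨0, by omega⟩
  have hge (k : Fin n) (hk : k ≠ k₀) : μ ⟨1, hn⟩ ≤ hA.eigenvalues k := by
    have : σ k ≠ ⟨0, by omega⟩ := fun h => hk (σ.eq_symm_apply.mpr h)
    rw [hσ]
    exact hμ (Fin.mk_le_of_le_val (Nat.one_le_iff_ne_zero.mpr (by simpa [Fin.ext_iff] using this)))
  have hterm (k : Fin n) :
      μ ⟨1, hn⟩ * (⇑(hA.eigenvectorBasis k) ⬝ᵥ x) ^ 2 ≤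
        hA.eigenvalues k * (⇑(hA.eigenvectorBasis k) ⬝ᵥ x) ^ 2 := by
    by_cases hk : k ≠ k₀
    · exact mul_le_mul_of_nonneg_right (hge k hk) (sq_nonneg _)
    by_cases hμ₁ : μ ⟨1, hn⟩ ≤ 0
    · exact (mul_nonpos_of_nonpos_of_nonneg hμ₁ (sq_nonneg _)).trans
        (mul_nonneg (hpsd.eigenvalues_nonneg k) (sq_nonneg _))
    -- every eigenvalue off `k₀` is `≥ μ₁ > 0`, so `w ∈ ker A` lies along the `k₀`-th eigenvector
    have hperp (k' : Fin n) (hk' : k' ≠ k₀) : ⇑(hA.eigenvectorBasis k') ⬝ᵥ w = 0 := by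
      have := hA.eigenvectorBasis_dotProduct_mulVec k' w
      rw [hAw, dotProduct_zero] at this
      exact (mul_eq_zero.mp this.symm).resolve_left (by linarith [hge k' hk'])
    simp [not_not.mp hk, hA.eigenvectorBasis_dotProduct_eq_zero hw hx hperp]
  rw [hA.dotProduct_mulVec_eq_sum_eigenvalues, hA.dotProduct_self_eq_sum_sq, Finset.mul_sum]
  exact Finset.sum_le_sum fun k _ => hterm k

section Laplacian
variable {n : ℕ} (W : Matrix (Fin n) (Fin n) ℝ)

lemma lap_mulVec_apply (x : Fin n → ℝ) (a : Fin n) :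
    (lap W *ᵥ x) a = ∑ b, W a b * (x a - x b) := by
  rw [lap, sub_mulVec, Pi.sub_apply, mulVec_diagonal, deg, Finset.sum_mul]
  simp only [mulVec, dotProduct, ← Finset.sum_sub_distrib, mul_sub]

lemma lap_mulVec_one : lap W *ᵥ 1 = 0 := by
  ext a
  simp [lap_mulVec_apply]

variable {W}

lemma lap_isSymm (hW : W.IsSymm) : (lap W).IsSymm :=
  (isSymm_diagonal _).sub hW

lemma one_vecMul_lap (hW : W.IsSymm) : 1 ᵥ* lap W = 0 := by
  rw [← mulVec_transpose, (lap_isSymm hW).eq, lap_mulVec_one]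

lemma dotProduct_lap_mulVec (hW : W.IsSymm) (x : Fin n → ℝ) :
    x ⬝ᵥ (lap W *ᵥ x) = (∑ a, ∑ b, W a b * (x a - x b) ^ 2) / 2 := by
  have h : x ⬝ᵥ (lap W *ᵥ x) = ∑ a, ∑ b, W a b * x a * (x a - x b) := by
    simp only [dotProduct, lap_mulVec_apply, Finset.mul_sum]
    exact Finset.sum_congr rfl fun a _ => Finset.sum_congr rfl fun b _ => by ring
  have hswap : ∑ a, ∑ b, W a b * x a * (x a - x b) = ∑ a, ∑ b, W a b * x b * (x b - x a) := by
    rw [Finset.sum_comm]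
    simp only [hW.apply]
  have hsum : ∑ a, ∑ b, W a b * x a * (x a - x b) + ∑ a, ∑ b, W a b * x b * (x b - x a) =
      ∑ a, ∑ b, W a b * (x a - x b) ^ 2 := by
    rw [← Finset.sum_add_distrib]
    refine Finset.sum_congr rfl fun a _ => ?_
    rw [← Finset.sum_add_distrib]
    exact Finset.sum_congr rfl fun b _ => by ring
  linarith

lemma lap_posSemidef (hW : W.IsSymm) (hW₀ : ∀ a b, 0 ≤ W a b) : (lap W).PosSemidef := by
  refine .of_dotProduct_mulVec_nonneg (isHermitian_iff_isSymm.mpr (lap_isSymm hW)) fun x => ?_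
  rw [star_trivial, dotProduct_lap_mulVec hW]
  exact div_nonneg (Finset.sum_nonneg fun a _ => Finset.sum_nonneg fun b _ =>
    mul_nonneg (hW₀ a b) (sq_nonneg _)) zero_le_two

end Laplacian

section Polarization
variable {n : ℕ}

lemma dotProduct_vij (x : Fin n → ℝ) (i j : Fin n) : x ⬝ᵥ vij i j = x i - x j := by
  simp [vij, dotProduct, mul_sub, Finset.sum_sub_distrib]

lemma vij_dotProduct_vij {i j : Fin n} (hij : i ≠ j) : vij i j ⬝ᵥ vij i j = 2 := by
  rw [dotProduct_vij]
  simp [vij, hij, hij.symm, one_add_one_eq_two]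

lemma sum_eq_card_mul_mean (x : Fin n → ℝ) : ∑ k, x k = n * mean x := by
  rcases eq_or_ne n 0 with rfl | hn
  · simp
  · rw [mean, mul_div_cancel₀ _ (Nat.cast_ne_zero.mpr hn)]

lemma ctr_eq (x : Fin n → ℝ) : ctr x = x - mean x • 1 := by
  ext k
  simp [ctr]

lemma ctr_dotProduct_one (x : Fin n → ℝ) : ctr x ⬝ᵥ 1 = 0 := by
  simp [ctr_eq, dotProduct_one, sum_eq_card_mul_mean x, mul_comm]

lemma ctr_dotProduct_ctr (x y : Fin n → ℝ) : ctr x ⬝ᵥ ctr y = ctr x ⬝ᵥ y := by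
  rw [ctr_eq y, dotProduct_sub, dotProduct_smul, ctr_dotProduct_one, smul_zero, sub_zero]

lemma pol_eq_ctr_dotProduct_ctr (x : Fin n → ℝ) : pol x = ctr x ⬝ᵥ ctr x := by
  simp [pol, ctr, dotProduct, sq]

lemma ctr_sub_smul (x y : Fin n → ℝ) (c : ℝ) : ctr (x - c • y) = ctr x - c • ctr y := by
  have hmean : mean (x - c • y) = mean x - c * mean y := by
    simp only [mean, Pi.sub_apply, Pi.smul_apply, smul_eq_mul, Finset.sum_sub_distrib,
      ← Finset.mul_sum]
    ring
  ext k
  simp only [ctr, hmean, Pi.sub_apply, Pi.smul_apply, smul_eq_mul]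
  ring

lemma pol_sub_pol_sub_smul (x y : Fin n → ℝ) (c : ℝ) :
    pol x - pol (x - c • y) = 2 * c * (ctr x ⬝ᵥ y) - c ^ 2 * pol y := by
  simp only [pol_eq_ctr_dotProduct_ctr, ctr_sub_smul, dotProduct_sub, sub_dotProduct,
    dotProduct_smul, smul_dotProduct, smul_eq_mul, ctr_dotProduct_ctr x y]
  rw [dotProduct_comm (ctr y) (ctr x), ctr_dotProduct_ctr x y]
  ring

lemma pol_le_dotProduct_self (x : Fin n → ℝ) : pol x ≤ x ⬝ᵥ x := by
  have h : pol x = x ⬝ᵥ x - n * mean x ^ 2 := by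
    rw [pol_eq_ctr_dotProduct_ctr, ctr_dotProduct_ctr, ctr_eq, sub_dotProduct, smul_dotProduct,
      one_dotProduct, sum_eq_card_mul_mean, smul_eq_mul]
    ring
  have : 0 ≤ (n : ℝ) * mean x ^ 2 := by positivity
  linarith

lemma ctr_dotProduct_vij (x : Fin n → ℝ) (i j : Fin n) : ctr x ⬝ᵥ vij i j = x i - x j := by
  rw [dotProduct_vij, ctr, ctr]
  ring

end Polarization

lemma polarization_drop_bound {δ ε a R p t q l : ℝ} (hδ : 0 < δ) (hε : 0 ≤ ε) (ha : a ≠ 0)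
    (hp : p ≤ t) (ht : 0 ≤ t) (htq : t ≤ q) (hq : q ≤ 2) (htl : t * (1 + l) ^ 2 ≤ 2)
    (hR : R / a ≥ ε + δ / (2 * δ + (1 + l) ^ 2)) :
    2 * δ * ε * a ^ 2 / (1 + 2 * δ) ≤
      2 * (δ * a / (1 + δ * q)) * R - (δ * a / (1 + δ * q)) ^ 2 * p := by
  set D := 1 + δ * q
  have hD : 0 < D := by nlinarith
  have hDle : D ≤ 1 + 2 * δ := by nlinarith
  have hP : 0 < 2 * δ + (1 + l) ^ 2 := by positivity
  have hshift : δ * t / (2 * D) ≤ δ / (2 * δ + (1 + l) ^ 2) := by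
    rw [div_le_div_iff₀ (by positivity) hP]
    have : t * (2 * δ + (1 + l) ^ 2) ≤ 2 * D := by nlinarith
    nlinarith
  calc 2 * δ * ε * a ^ 2 / (1 + 2 * δ)
      ≤ 2 * δ * a ^ 2 / D * ε := by
        rw [div_mul_eq_mul_div, div_le_div_iff₀ (by positivity) hD]
        nlinarith [mul_le_mul_of_nonneg_left hDle (by positivity : 0 ≤ 2 * δ * ε * a ^ 2)]
    _ ≤ 2 * δ * a ^ 2 / D * (R / a - δ * t / (2 * D)) := by gcongr; linarith
    _ = 2 * (δ * a / D) * R - (δ * a / D) ^ 2 * t := by field_simp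
    _ ≤ 2 * (δ * a / D) * R - (δ * a / D) ^ 2 * p := by gcongr

/-- Theorem 1, lower bound: if
`z̃ᵀ(I+L)⁻¹v_ij / z̃ᵀv_ij ≥ ε + δ/(2δ + (1 + λ₂(L))²)` for some `ε > 0`, then the
reduction in polarization is at least `2δε(z_i - z_j)² / (1 + 2δ)`.
Here `μ` lists the eigenvalues of `L` with multiplicity in increasing order. -/
theorem stmt_7 {n : ℕ} (hn : 2 ≤ n) (wbar : ℝ)
    (W : Matrix (Fin n) (Fin n) ℝ)
    (hsymm : W.IsSymm)
    (hW : ∀ i j, 0 ≤ W i j ∧ W i j ≤ wbar)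
    (s : Fin n → ℝ) (i j : Fin n) (hij : i ≠ j)
    (δ : ℝ) (hδ0 : 0 < δ)
    (z zp : Fin n → ℝ)
    (hz : z = (1 + lap W)⁻¹ *ᵥ s)
    (hzp : zp = (1 + (lap W + δ • vecMulVec (vij i j) (vij i j)))⁻¹ *ᵥ s)
    (hzij : z i ≠ z j)
    (hL : (lap W).IsHermitian)
    (μ : Fin n → ℝ) (hmono : Monotone μ)
    (hperm : ∃ σ : Equiv.Perm (Fin n), hL.eigenvalues = μ ∘ σ)
    (ε : ℝ) (hε : 0 < ε)
    (hratio : (ctr z ⬝ᵥ ((1 + lap W)⁻¹ *ᵥ vij i j)) / (ctr z ⬝ᵥ vij i j) ≥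
      ε + δ / (2 * δ + (1 + μ ⟨1, by omega⟩) ^ 2)) :
    pol z - pol zp ≥ 2 * δ * ε * (z i - z j) ^ 2 / (1 + 2 * δ) := by
  obtain ⟨σ, hσ⟩ := hperm
  set u := (1 + lap W)⁻¹ *ᵥ vij i j
  have hpsd : (lap W).PosSemidef := lap_posSemidef hsymm fun a b => (hW a b).1
  have hM : IsUnit (1 + lap W).det := (PosDef.one.add_posSemidef hpsd).det_pos.ne'.isUnit
  have hu : u + lap W *ᵥ u = vij i j := by
    have h : (1 + lap W) *ᵥ u = vij i j := by rw [mulVec_mulVec, mul_nonsing_inv _ hM, one_mulVec]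
    rwa [add_mulVec, one_mulVec] at h
  have ht : 0 ≤ u ⬝ᵥ u := by simpa using dotProduct_star_self_nonneg u
  have htq := dotProduct_self_le_of_add_mulVec_eq hpsd hu
  have hq := vij_dotProduct_vij hij ▸ dotProduct_le_of_add_mulVec_eq hpsd hu
  have hu1 : 1 ⬝ᵥ u = 0 := by
    rw [dotProduct_eq_of_add_mulVec_eq (one_vecMul_lap hsymm) hu, dotProduct_vij]
    simp
  have hμ₁ : 0 ≤ μ ⟨1, by omega⟩ := by
    simpa [hσ] using hpsd.eigenvalues_nonneg (σ.symm ⟨1, by omega⟩)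
  have hspec := hpsd.sorted_eigenvalue_one_mul_dotProduct_self_le hL (by omega) hmono hσ
    (Function.ne_iff.mpr ⟨⟨0, by omega⟩, one_ne_zero⟩) (lap_mulVec_one W) hu1
  have htl := vij_dotProduct_vij hij ▸ sq_one_add_mul_dotProduct_self_le hμ₁ hspec hu
  have hzp' : zp = z - (δ * (z i - z j) / (1 + δ * (vij i j ⬝ᵥ u))) • u := by
    rw [hzp, ← add_assoc, inv_add_smul_vecMulVec_self_mulVec hM (by nlinarith) s, ← hz,
      dotProduct_comm, dotProduct_vij]
  rw [ctr_dotProduct_vij] at hratio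
  rw [hzp', ge_iff_le, pol_sub_pol_sub_smul]
  exact polarization_drop_bound hδ0 hε.le (sub_ne_zero.mpr hzij) (pol_le_dotProduct_self u)
    ht htq hq htl hratio
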